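/- arXiv:2605.30013 — 3 statements merged into one kernel-verified Lean document; each statement's English description precedes it below -/
import Mathlib

section
/- Let H be a finite-dimensional complex inner product space, let Π and Δ be orthogonal projections on H, and let U = (2Π − I)(2Δ − I). Then for every ψ ∈ ker Π, the generic catalyst expression simplifies: (Π − ΠUΠ)⁺ Π U ψ = (Π − ΠΔΠ)⁺ Δ ψ. -/
/-!
Expanding `U = (2Π - 1)(2Δ - 1)` with `Π² = Π` gives `Π - ΠUΠ = 2(Π - ΠΔΠ)` and
`ΠU = 2ΠΔ - Π`. By uniqueness of the Moore–Penrose inverse, `(Π - ΠUΠ)⁺ = ½ (Π - ΠΔΠ)⁺`,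
so for `ψ ∈ ker Π` the left-hand side is `(Π - ΠΔΠ)⁺ ΠΔψ`. Finally `A⁺` vanishes on `ker A*`,
which for `A = Π - ΠΔΠ` contains the range of `1 - Π`; hence `ΠΔψ` may be replaced by `Δψ`.
-/

open LinearMap

/-- The four Moore–Penrose equations: `B` is the Moore–Penrose pseudoinverse of `A`. -/
def IsMPInv {H : Type*} [NormedAddCommGroup H] [InnerProductSpace ℂ H]
    [FiniteDimensional ℂ H] (A B : H →ₗ[ℂ] H) : Prop :=
  A ∘ₗ B ∘ₗ A = A ∧ B ∘ₗ A ∘ₗ B = B ∧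
    adjoint (A ∘ₗ B) = A ∘ₗ B ∧ adjoint (B ∘ₗ A) = B ∘ₗ A

structure IsMoorePenroseInverse {R : Type*} [Mul R] [Star R] (a b : R) : Prop where
  mul_inv_mul : a * b * a = a
  inv_mul_inv : b * a * b = b
  isSelfAdjoint_mul_inv : IsSelfAdjoint (a * b)
  isSelfAdjoint_inv_mul : IsSelfAdjoint (b * a)

namespace IsMoorePenroseInverse

section Semigroup

variable {R : Type*} [Semigroup R] [StarMul R] {a b c : R}

theorem mul_inv_eq (hb : IsMoorePenroseInverse a b) (hc : IsMoorePenroseInverse a c) :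
    a * b = a * c :=
  calc a * b = a * c * (a * b) := by rw [← mul_assoc, hc.mul_inv_mul]
    _ = star ((a * b) * (a * c)) := by
      rw [star_mul, hb.isSelfAdjoint_mul_inv.star_eq, hc.isSelfAdjoint_mul_inv.star_eq]
    _ = a * c := by rw [← mul_assoc, hb.mul_inv_mul, hc.isSelfAdjoint_mul_inv.star_eq]

theorem inv_mul_eq (hb : IsMoorePenroseInverse a b) (hc : IsMoorePenroseInverse a c) :
    b * a = c * a :=
  calc b * a = b * a * (c * a) := by rw [mul_assoc b a, ← mul_assoc a c, hc.mul_inv_mul]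
    _ = star ((c * a) * (b * a)) := by
      rw [star_mul, hb.isSelfAdjoint_inv_mul.star_eq, hc.isSelfAdjoint_inv_mul.star_eq]
    _ = c * a := by
      rw [← mul_assoc, mul_assoc c a b, mul_assoc c, hb.mul_inv_mul,
        hc.isSelfAdjoint_inv_mul.star_eq]

theorem unique (hb : IsMoorePenroseInverse a b) (hc : IsMoorePenroseInverse a c) : b = c :=
  calc b = b * a * b := hb.inv_mul_inv.symm
    _ = c * (a * c) := by rw [inv_mul_eq hb hc, mul_assoc, mul_inv_eq hb hc]
    _ = c := by rw [← mul_assoc, hc.inv_mul_inv]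

end Semigroup

theorem mul_eq_zero_of_star_mul_eq_zero {R : Type*} [SemigroupWithZero R] [StarMul R]
    {a b x : R} (hb : IsMoorePenroseInverse a b) (hx : star a * x = 0) : b * x = 0 :=
  calc b * x = b * star (a * b) * x := by
        rw [hb.isSelfAdjoint_mul_inv.star_eq, ← mul_assoc b, hb.inv_mul_inv]
    _ = 0 := by rw [star_mul, mul_assoc, mul_assoc, hx, mul_zero, mul_zero]

theorem of_smul {K R : Type*} [Field K] [Semiring R] [Star R] [Module K R] [IsScalarTower K R R]
    [SMulCommClass K R R] {r : K} (hr : r ≠ 0) {a b : R}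
    (h : IsMoorePenroseInverse (r • a) b) : IsMoorePenroseInverse a (r • b) := by
  have hab : a * (r • b) = r • a * b := by rw [mul_smul_comm, smul_mul_assoc]
  have hba : r • b * a = b * (r • a) := by rw [mul_smul_comm, smul_mul_assoc]
  refine ⟨?_, ?_, hab ▸ h.isSelfAdjoint_mul_inv, hba ▸ h.isSelfAdjoint_inv_mul⟩
  · have h1 : r • (a * (r • b) * a) = r • a := by
      simpa only [smul_mul_assoc, mul_smul_comm] using h.mul_inv_mul
    exact smul_right_injective R hr h1
  · rw [hba, mul_smul_comm, h.inv_mul_inv]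

end IsMoorePenroseInverse

section Reflection

variable {K R : Type*} [CommRing K] [Ring R] [Algebra K R] {p : R}

theorem IsIdempotentElem.mul_two_smul_sub_one (hp : IsIdempotentElem p) :
    p * ((2 : K) • p - 1) = p := by
  rw [mul_sub, mul_smul_comm, hp.eq, two_smul, mul_one, add_sub_cancel_right]

theorem IsIdempotentElem.sub_mul_reflection_mul_reflection_mul (hp : IsIdempotentElem p)
    (d : R) :
    p - p * (((2 : K) • p - 1) * ((2 : K) • d - 1)) * p = (2 : K) • (p - p * d * p) := by
  rw [← mul_assoc, hp.mul_two_smul_sub_one, mul_sub, sub_mul, mul_smul_comm,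
    smul_mul_assoc, mul_one, hp.eq, smul_sub, two_smul K p]
  abel

theorem IsStarProjection.star_sub_mul_mul_one_sub [StarRing R] (hp : IsStarProjection p)
    (d : R) :
    star (p - p * d * p) * (1 - p) = 0 := by
  have hq : star (1 - p) = 1 - p := hp.one_sub.isSelfAdjoint.star_eq
  have hfactor : p - p * d * p = p * (1 - d * p) := by rw [mul_sub, mul_one, mul_assoc]
  rw [← hq, ← star_mul, hfactor, ← mul_assoc, hp.one_sub_mul_self, zero_mul, star_zero]

end Reflection

theorem IsMoorePenroseInverse.mul_mul_reflection_mul_one_sub {K R : Type*} [Field K] [Ring R]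
    [StarRing R] [Algebra K R] (h2 : (2 : K) ≠ 0) {p d b b' : R} (hp : IsStarProjection p)
    (hb : IsMoorePenroseInverse (p - p * (((2 : K) • p - 1) * ((2 : K) • d - 1)) * p) b)
    (hb' : IsMoorePenroseInverse (p - p * d * p) b') :
    b * (p * (((2 : K) • p - 1) * ((2 : K) • d - 1))) * (1 - p) = b' * d * (1 - p) := by
  rw [hp.isIdempotentElem.sub_mul_reflection_mul_reflection_mul] at hb
  have hbb' : (2 : K) • b = b' := (hb.of_smul h2).unique hb'
  have hb'p : b' * p = b' := by
    have := hb'.mul_eq_zero_of_star_mul_eq_zero (hp.star_sub_mul_mul_one_sub d)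
    rwa [mul_sub, mul_one, sub_eq_zero, eq_comm] at this
  calc b * (p * (((2 : K) • p - 1) * ((2 : K) • d - 1))) * (1 - p)
      = b * ((2 : K) • (p * d) - p) * (1 - p) := by
        rw [← mul_assoc p, hp.isIdempotentElem.mul_two_smul_sub_one, mul_sub p, mul_smul_comm,
          mul_one]
    _ = (2 : K) • b * p * d * (1 - p) := by
        rw [mul_sub b, sub_mul, mul_assoc b p, hp.mul_one_sub_self, mul_zero, sub_zero]
        simp only [mul_smul_comm, smul_mul_assoc, mul_assoc]
    _ = b' * d * (1 - p) := by rw [hbb', hb'p]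

theorem IsMPInv.isMoorePenroseInverse {H : Type*} [NormedAddCommGroup H]
    [InnerProductSpace ℂ H] [FiniteDimensional ℂ H] {A B : H →ₗ[ℂ] H} (h : IsMPInv A B) :
    IsMoorePenroseInverse A B :=
  ⟨h.1, h.2.1, (star_eq_adjoint _).trans h.2.2.1, (star_eq_adjoint _).trans h.2.2.2⟩

theorem stmt5_general {H : Type*} [NormedAddCommGroup H] [InnerProductSpace ℂ H]
    [FiniteDimensional ℂ H]
    (Pr Dl : H →ₗ[ℂ] H)
    (hPr : Pr ∘ₗ Pr = Pr) (hPra : adjoint Pr = Pr)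
    (U : H →ₗ[ℂ] H)
    (hU : U = ((2 : ℂ) • Pr - LinearMap.id) ∘ₗ ((2 : ℂ) • Dl - LinearMap.id))
    (B : H →ₗ[ℂ] H) (hB : IsMPInv (Pr - Pr ∘ₗ U ∘ₗ Pr) B)
    (B' : H →ₗ[ℂ] H) (hB' : IsMPInv (Pr - Pr ∘ₗ Dl ∘ₗ Pr) B')
    (ψ : H) (hψ : ψ ∈ ker Pr) :
    B ((Pr ∘ₗ U) ψ) = B' (Dl ψ) := by
  subst hU
  have hproj : IsStarProjection Pr :=
    isStarProjection_iff'.mpr ⟨hPr, (star_eq_adjoint Pr).trans hPra⟩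
  have key := hB.isMoorePenroseInverse.mul_mul_reflection_mul_one_sub two_ne_zero hproj
    hB'.isMoorePenroseInverse
  have hψ' : (1 - Pr) ψ = ψ := by simp [mem_ker.mp hψ]
  simpa [hψ'] using LinearMap.congr_fun key ψ

/-- For `U = (2Π − I)(2Δ − I)` and `ψ ∈ ker Π`, the generic catalyst simplifies:
`(Π − ΠUΠ)⁺ Π U ψ = (Π − ΠΔΠ)⁺ Δ ψ`. -/
theorem stmt5 {H : Type*} [NormedAddCommGroup H] [InnerProductSpace ℂ H]
    [FiniteDimensional ℂ H]
    (Pr Dl : H →ₗ[ℂ] H)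
    (hPr : Pr ∘ₗ Pr = Pr) (hPra : adjoint Pr = Pr)
    (hDl : Dl ∘ₗ Dl = Dl) (hDla : adjoint Dl = Dl)
    (U : H →ₗ[ℂ] H)
    (hU : U = ((2 : ℂ) • Pr - LinearMap.id) ∘ₗ ((2 : ℂ) • Dl - LinearMap.id))
    (B : H →ₗ[ℂ] H) (hB : IsMPInv (Pr - Pr ∘ₗ U ∘ₗ Pr) B)
    (B' : H →ₗ[ℂ] H) (hB' : IsMPInv (Pr - Pr ∘ₗ Dl ∘ₗ Pr) B')
    (ψ : H) (hψ : ψ ∈ ker Pr) :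
    B ((Pr ∘ₗ U) ψ) = B' (Dl ψ) :=
  stmt5_general Pr Dl hPr hPra U hU B hB B' hB' ψ hψ
end

section
/- There exists a universal constant C > 0 such that the following holds. Let n ≥ 2, let Q be an n × n real matrix with nonnegative entries whose row sums are all at most 1, let δ ∈ (0, 1] and 0 < m ≤ n be real numbers, and suppose that ‖Q‖ ≤ 1 − δm/n and that for every natural number t and all indices s, x one has (Qᵗ)_{s,x} ≤ 1/n + (1−δ)ᵗ. Then for every index s: Σ_{t≥0} Σ_x (Qᵗ)_{s,x} ≤ C ( (log n)/δ + n/(δ m) ). (This is the matrix form of the hitting-time bound HT_s ∈ O(n/m + log n) on expanders, since HT_s = Σ_{t,x} (Qᵗ)_{s,x} for the killed walk matrix Q.) -/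
/-!
Split the walk at `T = ⌈log n / δ⌉`. Before `T` each row of `Qᵗ` has mass at most `1`, which
contributes at most `T`. At time `T` the entrywise bound gives `(Qᵀ)_{s,y} ≤ 2/n`, so the mass
of row `s` of `Q^{T+t}` is at most `2/n` times the total mass `∑_{y,x} (Qᵗ)_{y,x}`; by
Cauchy–Schwarz the latter is at most `n ‖Q‖ᵗ ≤ n (1 - δm/n)ᵗ`, and the resulting geometric
series sums to `2n/(δm)`.
-/

open Matrix Finset

namespace Matrix

variable {ι : Type*} [Fintype ι] [DecidableEq ι] {Q : Matrix ι ι ℝ}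

lemma sum_pow_add_apply (Q : Matrix ι ι ℝ) (a b : ℕ) (s : ι) :
    ∑ x, (Q ^ (a + b)) s x = ∑ y, (Q ^ a) s y * ∑ x, (Q ^ b) y x := by
  simp only [pow_add, mul_apply, mul_sum]
  exact sum_comm

lemma sum_pow_add_apply_le (hQ : ∀ i j, 0 ≤ Q i j) {a : ℕ} {s : ι} {ε : ℝ}
    (hε : ∀ y, (Q ^ a) s y ≤ ε) (b : ℕ) :
    ∑ x, (Q ^ (a + b)) s x ≤ ε * ∑ y, ∑ x, (Q ^ b) y x := by
  rw [sum_pow_add_apply, mul_sum]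
  exact sum_le_sum fun y _ =>
    mul_le_mul_of_nonneg_right (hε y) (sum_nonneg fun x _ => pow_apply_nonneg hQ b y x)

lemma sum_pow_apply_le_one (hQ : ∀ i j, 0 ≤ Q i j) (hrow : ∀ i, ∑ j, Q i j ≤ 1)
    (t : ℕ) (i : ι) : ∑ j, (Q ^ t) i j ≤ 1 := by
  induction t generalizing i with
  | zero => simp [one_apply]
  | succ t ih =>
    rw [add_comm, sum_pow_add_apply, pow_one]
    calc ∑ y, Q i y * ∑ j, (Q ^ t) y j ≤ ∑ y, Q i y :=
          sum_le_sum fun y _ => mul_le_of_le_one_right (hQ i y) (ih y)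
      _ ≤ 1 := hrow i

lemma sqrt_sum_sq_pow_mulVec_le {c : ℝ} (hc : 0 ≤ c)
    (hQ : ∀ x : ι → ℝ, √(∑ i, (Q *ᵥ x) i ^ 2) ≤ c * √(∑ i, x i ^ 2)) (t : ℕ) (x : ι → ℝ) :
    √(∑ i, ((Q ^ t) *ᵥ x) i ^ 2) ≤ c ^ t * √(∑ i, x i ^ 2) := by
  induction t with
  | zero => simp
  | succ t ih =>
    rw [pow_succ', ← mulVec_mulVec, pow_succ', mul_assoc]
    exact (hQ _).trans (mul_le_mul_of_nonneg_left ih hc)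

lemma sum_sum_pow_apply_le {c : ℝ} (hc : 0 ≤ c)
    (hQ : ∀ x : ι → ℝ, √(∑ i, (Q *ᵥ x) i ^ 2) ≤ c * √(∑ i, x i ^ 2)) (t : ℕ) :
    ∑ i, ∑ j, (Q ^ t) i j ≤ Fintype.card ι * c ^ t := by
  set v := (Q ^ t) *ᵥ fun _ => 1
  have hv : ∀ i, v i = ∑ j, (Q ^ t) i j := fun i => by simp [v, mulVec, dotProduct]
  have hcs : (∑ i, v i) ^ 2 ≤ Fintype.card ι * ∑ i, v i ^ 2 := by
    simpa using sq_sum_le_card_mul_sum_sq (s := univ) (f := v)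
  have hnorm := sqrt_sum_sq_pow_mulVec_le hc hQ t fun _ => 1
  simp only [one_pow, sum_const, card_univ, nsmul_eq_mul, mul_one] at hnorm
  calc ∑ i, ∑ j, (Q ^ t) i j = ∑ i, v i := by simp only [hv]
    _ ≤ √(Fintype.card ι * ∑ i, v i ^ 2) := (le_abs_self _).trans (Real.abs_le_sqrt hcs)
    _ = √(Fintype.card ι) * √(∑ i, v i ^ 2) := Real.sqrt_mul (Nat.cast_nonneg _) _
    _ ≤ √(Fintype.card ι) * (c ^ t * √(Fintype.card ι)) :=
        mul_le_mul_of_nonneg_left hnorm (Real.sqrt_nonneg _)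
    _ = Fintype.card ι * c ^ t := by
        rw [mul_left_comm, Real.mul_self_sqrt (Nat.cast_nonneg _), mul_comm]

end Matrix

lemma tsum_le_of_le_one_of_tail_le_geometric {f : ℕ → ℝ} (hf0 : ∀ t, 0 ≤ f t) {T : ℕ}
    (hf1 : ∀ t < T, f t ≤ 1) {K r : ℝ} (hr0 : 0 ≤ r) (hr1 : r < 1)
    (htail : ∀ t, f (t + T) ≤ K * r ^ t) :
    ∑' t, f t ≤ T + K * (1 - r)⁻¹ := by
  have hgeom : Summable fun t : ℕ => K * r ^ t :=
    (summable_geometric_of_lt_one hr0 hr1).mul_left K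
  have hshift : Summable fun t => f (t + T) :=
    hgeom.of_nonneg_of_le (fun t => hf0 _) htail
  rw [← (summable_nat_add_iff T).1 hshift |>.sum_add_tsum_nat_add T]
  gcongr
  · calc ∑ t ∈ range T, f t ≤ ∑ t ∈ range T, 1 := sum_le_sum fun t ht => hf1 t (mem_range.1 ht)
      _ = T := by simp
  · calc ∑' t, f (t + T) ≤ ∑' t : ℕ, K * r ^ t := hshift.tsum_le_tsum htail hgeom
      _ = K * (1 - r)⁻¹ := by rw [tsum_mul_left, tsum_geometric_of_lt_one hr0 hr1]

lemma one_sub_pow_ceil_log_div_le {δ x : ℝ} (hδ0 : 0 < δ) (hδ1 : δ ≤ 1) (hx : 0 < x) :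
    (1 - δ) ^ ⌈Real.log x / δ⌉₊ ≤ x⁻¹ := by
  set T := ⌈Real.log x / δ⌉₊
  have hT : Real.log x ≤ δ * T := by
    rw [← div_le_iff₀' hδ0]
    exact Nat.le_ceil _
  calc (1 - δ) ^ T ≤ Real.exp (-δ) ^ T := by
        gcongr
        linarith [Real.add_one_le_exp (-δ)]
    _ = Real.exp (-(δ * T)) := by rw [← Real.exp_nat_mul]; ring_nf
    _ ≤ Real.exp (-Real.log x) := by gcongr
    _ = x⁻¹ := by rw [Real.exp_neg, Real.exp_log hx]

/-- Hitting-time bound on expanders, in matrix form: there is a universal constant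
`C > 0` such that for any substochastic nonnegative `Q` with `‖Q‖ ≤ 1 − δm/n` and
`(Qᵗ)_{s,x} ≤ 1/n + (1−δ)ᵗ`, one has `Σ_{t≥0} Σ_x (Qᵗ)_{s,x} ≤ C(log n/δ + n/(δm))`. -/
theorem stmt18 :
    ∃ C : ℝ, 0 < C ∧
      ∀ (n : ℕ), 2 ≤ n →
      ∀ Q : Matrix (Fin n) (Fin n) ℝ,
        (∀ i j, 0 ≤ Q i j) →
        (∀ i, ∑ j, Q i j ≤ 1) →
        ∀ δ m : ℝ, 0 < δ → δ ≤ 1 → 0 < m → m ≤ n →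
        (∀ x : Fin n → ℝ,
          Real.sqrt (∑ i, (Q.mulVec x) i ^ 2) ≤
            (1 - δ * m / n) * Real.sqrt (∑ i, x i ^ 2)) →
        (∀ (t : ℕ) (s x : Fin n), (Q ^ t) s x ≤ 1 / n + (1 - δ) ^ t) →
        ∀ s : Fin n,
          ∑' t : ℕ, ∑ x, (Q ^ t) s x ≤ C * (Real.log n / δ + n / (δ * m)) := by
  refine ⟨3, by norm_num, fun n hn Q hQ hrow δ m hδ hδ1 hm hmn hnorm hent s => ?_⟩
  have hn0 : (0 : ℝ) < n := Nat.cast_pos.2 (by omega)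
  have hc0 : 0 ≤ 1 - δ * m / n := by rw [sub_nonneg, div_le_one hn0]; nlinarith
  have hc1 : 1 - δ * m / n < 1 := sub_lt_self 1 (by positivity)
  set T := ⌈Real.log n / δ⌉₊
  have hmixed : ∀ y, (Q ^ T) s y ≤ 2 / n := fun y =>
    calc (Q ^ T) s y ≤ 1 / n + (1 - δ) ^ T := hent T s y
      _ ≤ 1 / n + 1 / n := by rw [one_div]; gcongr; exact one_sub_pow_ceil_log_div_le hδ hδ1 hn0
      _ = 2 / n := by ring
  have htail : ∀ t, ∑ x, (Q ^ (t + T)) s x ≤ 2 * (1 - δ * m / n) ^ t := fun t =>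
    calc ∑ x, (Q ^ (t + T)) s x ≤ 2 / n * ∑ y, ∑ x, (Q ^ t) y x := by
          rw [add_comm]; exact sum_pow_add_apply_le hQ hmixed t
      _ ≤ 2 / n * (n * (1 - δ * m / n) ^ t) := by
          gcongr; simpa using sum_sum_pow_apply_le hc0 hnorm t
      _ = 2 * (1 - δ * m / n) ^ t := by field_simp
  have hsum := tsum_le_of_le_one_of_tail_le_geometric
    (fun t => sum_nonneg fun x _ => pow_apply_nonneg hQ t s x)
    (fun t _ => sum_pow_apply_le_one hQ hrow t s) hc0 hc1 htail
  have hT : (T : ℝ) ≤ Real.log n / δ + 1 := (Nat.ceil_lt_add_one (by positivity)).le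
  have hlog : 0 ≤ Real.log n / δ := by positivity
  have hratio : 1 ≤ n / (δ * m) := by rw [le_div_iff₀ (by positivity)]; nlinarith
  have hinv : (1 - (1 - δ * m / n))⁻¹ = n / (δ * m) := by field_simp; ring
  rw [hinv] at hsum
  linarith
end

section
/- There exists a universal constant C > 0 such that the following holds. Let n ≥ 2, let Q be an n × n real matrix with nonnegative entries, let δ ∈ (0, 1] and 0 < m ≤ n be real numbers, and suppose that ‖Q‖ ≤ 1 − δm/n and that for every natural number t and all indices s, x one has (Qᵗ)_{s,x} ≤ 1/n + (1−δ)ᵗ. Then for every index s: Σ_{t≥0} (t+1) (Qᵗ)_{s,s} ≤ (C/δ²) ( 1 + n/m² ). (This is the matrix form of the escape-time bound ET_s ∈ O(1 + n/m²) on expanders, since d R_s ET_s = Σ_t (t+1)(Qᵗ)_{s,s} for a d-regular graph.) -/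
/-!
Let `A ≈ log n / δ`, so that `(1 - δ)^A ≤ 1/n` and every entry of `Q^A` is at most `2/n`.
For `t < 2A` the pointwise bound `(Qᵗ)_{s,s} ≤ 1/n + (1 - δ)ᵗ` costs `O(A²/n + 1/δ²)`.
For `t = u + 2A` write `Qᵗ = Q^A Qᵘ Q^A`: by Cauchy–Schwarz the diagonal entry is at most
`‖row_s Q^A‖ · ‖Qᵘ‖ · ‖col_s Q^A‖ ≤ (4/n) rᵘ` with `r = 1 - δm/n`, so the tail costs
`(4/n)(1/(1-r)² + 2A/(1-r)) = O(n/(δm)² + A/(δm))`. Finally `A δ ≤ 2√n` and AM–GM,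
`2√n m ≤ n + m²`, bring everything to `O((1 + n/m²)/δ²)`.
-/

open Finset Matrix

lemma hasSum_add_one_mul_geometric {r : ℝ} (h0 : 0 ≤ r) (h1 : r < 1) :
    HasSum (fun t : ℕ => ((t : ℝ) + 1) * r ^ t) (1 / (1 - r) ^ 2) := by
  have hr : ‖r‖ < 1 := by rwa [Real.norm_of_nonneg h0]
  simpa [Nat.choose_one_right] using hasSum_choose_mul_geometric_of_norm_lt_one 1 hr

lemma sum_range_add_one_mul_le_sq (K : ℕ) {a : ℝ} (ha : 0 ≤ a) :
    ∑ t ∈ range K, ((t : ℝ) + 1) * a ≤ (K : ℝ) ^ 2 * a := by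
  calc ∑ t ∈ range K, ((t : ℝ) + 1) * a ≤ ∑ _t ∈ range K, (K : ℝ) * a := by
        gcongr with t ht
        exact_mod_cast mem_range.1 ht
    _ = (K : ℝ) ^ 2 * a := by simp [sq, mul_assoc]

lemma tsum_le_of_head_tail {f : ℕ → ℝ} (hf : ∀ t, 0 ≤ f t) {K : ℕ} {a b θ r : ℝ}
    (ha : 0 ≤ a) (hθ0 : 0 ≤ θ) (hθ1 : θ < 1) (hr0 : 0 ≤ r) (hr1 : r < 1)
    (hhead : ∀ t < K, f t ≤ ((t : ℝ) + 1) * (a + θ ^ t))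
    (htail : ∀ u, f (u + K) ≤ ((u : ℝ) + K + 1) * (b * r ^ u)) :
    ∑' t, f t ≤ (K : ℝ) ^ 2 * a + 1 / (1 - θ) ^ 2 + b * (1 / (1 - r) ^ 2 + K / (1 - r)) := by
  have hg := ((hasSum_add_one_mul_geometric hr0 hr1).add
    ((hasSum_geometric_of_lt_one hr0 hr1).mul_left (K : ℝ))).mul_left b
  rw [← div_eq_mul_inv] at hg
  replace htail u : f (u + K) ≤ b * (((u : ℝ) + 1) * r ^ u + K * r ^ u) :=
    (htail u).trans_eq (by ring)
  have htail_summable : Summable fun u => f (u + K) :=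
    hg.summable.of_nonneg_of_le (fun u => hf _) htail
  have hhead_sum : ∑ t ∈ range K, f t ≤ (K : ℝ) ^ 2 * a + 1 / (1 - θ) ^ 2 := by
    calc ∑ t ∈ range K, f t
        ≤ ∑ t ∈ range K, (((t : ℝ) + 1) * a + ((t : ℝ) + 1) * θ ^ t) := by
          gcongr with t ht
          rw [← mul_add]
          exact hhead t (mem_range.1 ht)
      _ ≤ (K : ℝ) ^ 2 * a + 1 / (1 - θ) ^ 2 := by
          rw [sum_add_distrib]
          gcongr
          · exact sum_range_add_one_mul_le_sq K ha
          · exact sum_le_hasSum _ (fun t _ => by positivity) (hasSum_add_one_mul_geometric hθ0 hθ1)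
  rw [← ((summable_nat_add_iff K).1 htail_summable).sum_add_tsum_nat_add K]
  have := hg.tsum_eq ▸ htail_summable.tsum_le_tsum htail hg.summable
  linarith

lemma sum_sq_le_card_mul_sq {ι : Type*} [Fintype ι] {v : ι → ℝ} {c : ℝ}
    (h0 : ∀ i, 0 ≤ v i) (hc : ∀ i, v i ≤ c) :
    ∑ i, v i ^ 2 ≤ Fintype.card ι * c ^ 2 := by
  calc ∑ i, v i ^ 2 ≤ ∑ _i : ι, c ^ 2 := by gcongr with i; exacts [h0 i, hc i]
    _ = Fintype.card ι * c ^ 2 := by simp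

lemma Matrix.sqrt_sum_sq_pow_mulVec_le_s19 {ι : Type*} [Fintype ι] [DecidableEq ι]
    {Q : Matrix ι ι ℝ} {r : ℝ} (hr : 0 ≤ r)
    (hQ : ∀ x : ι → ℝ, √(∑ i, (Q *ᵥ x) i ^ 2) ≤ r * √(∑ i, x i ^ 2)) (t : ℕ) (x : ι → ℝ) :
    √(∑ i, ((Q ^ t) *ᵥ x) i ^ 2) ≤ r ^ t * √(∑ i, x i ^ 2) := by
  induction t with
  | zero => simp
  | succ t ih =>
    rw [pow_succ', ← Matrix.mulVec_mulVec]
    calc √(∑ i, (Q *ᵥ ((Q ^ t) *ᵥ x)) i ^ 2) ≤ r * √(∑ i, ((Q ^ t) *ᵥ x) i ^ 2) := hQ _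
      _ ≤ r * (r ^ t * √(∑ i, x i ^ 2)) := by gcongr
      _ = r ^ (t + 1) * √(∑ i, x i ^ 2) := by ring

lemma Matrix.mul_mul_apply_le {ι : Type*} [Fintype ι] (P R S : Matrix ι ι ℝ) {c : ℝ}
    (hR : ∀ x : ι → ℝ, √(∑ i, (R *ᵥ x) i ^ 2) ≤ c * √(∑ i, x i ^ 2)) (i j : ι) :
    (P * R * S) i j ≤ √(∑ x, P i x ^ 2) * (c * √(∑ x, S x j ^ 2)) := by
  have hentry : (P * R * S) i j = ∑ x, P i x * (R *ᵥ fun y => S y j) x := by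
    rw [Matrix.mul_assoc]
    simp only [mul_apply, mulVec, dotProduct]
  rw [hentry]
  exact (Real.sum_mul_le_sqrt_mul_sqrt _ _ _).trans (by gcongr; exact hR _)

lemma Matrix.pow_add_two_mul_apply_self_le {ι : Type*} [Fintype ι] [DecidableEq ι]
    {Q : Matrix ι ι ℝ} (hQ : ∀ i j, 0 ≤ Q i j) {r : ℝ} (hr : 0 ≤ r)
    (hnorm : ∀ x : ι → ℝ, √(∑ i, (Q *ᵥ x) i ^ 2) ≤ r * √(∑ i, x i ^ 2))
    {k : ℕ} {c : ℝ} (hc : ∀ i j, (Q ^ k) i j ≤ c) (u : ℕ) (s : ι) :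
    (Q ^ (u + 2 * k)) s s ≤ Fintype.card ι * c ^ 2 * r ^ u := by
  have hsplit : Q ^ (u + 2 * k) = Q ^ k * Q ^ u * Q ^ k := by
    rw [← pow_add, ← pow_add]; ring_nf
  have hrow := sum_sq_le_card_mul_sq (pow_apply_nonneg hQ k s) (hc s)
  have hcol := sum_sq_le_card_mul_sq (pow_apply_nonneg hQ k · s) (hc · s)
  rw [hsplit]
  calc (Q ^ k * Q ^ u * Q ^ k) s s
      ≤ √(∑ x, (Q ^ k) s x ^ 2) * (r ^ u * √(∑ x, (Q ^ k) x s ^ 2)) :=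
        Matrix.mul_mul_apply_le _ _ _ (Matrix.sqrt_sum_sq_pow_mulVec_le_s19 hr hnorm u) s s
    _ ≤ √(Fintype.card ι * c ^ 2) * (r ^ u * √(Fintype.card ι * c ^ 2)) := by gcongr
    _ = Fintype.card ι * c ^ 2 * r ^ u := by
        rw [mul_left_comm, Real.mul_self_sqrt (by positivity), mul_comm]

lemma exists_one_sub_pow_le_inv_and_mul_le_two_sqrt {δ : ℝ} (hδ0 : 0 < δ) (hδ1 : δ ≤ 1)
    {N : ℝ} (hN : 1 ≤ N) : ∃ A : ℕ, (1 - δ) ^ A ≤ 1 / N ∧ A * δ ≤ 2 * √N := by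
  refine ⟨⌈Real.log N / δ⌉₊, ?_, ?_⟩
  · have hlog : Real.log N ≤ ⌈Real.log N / δ⌉₊ * δ :=
      (div_le_iff₀ hδ0).1 (Nat.le_ceil _)
    calc (1 - δ) ^ ⌈Real.log N / δ⌉₊ ≤ Real.exp (-δ) ^ ⌈Real.log N / δ⌉₊ :=
          pow_le_pow_left₀ (by linarith) (Real.one_sub_le_exp_neg δ) _
      _ = Real.exp (-(⌈Real.log N / δ⌉₊ * δ)) := by rw [← Real.exp_nat_mul]; ring_nf
      _ ≤ Real.exp (-Real.log N) := by gcongr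
      _ = 1 / N := by rw [Real.exp_neg, Real.exp_log (by linarith), one_div]
  · -- `log N = 2 log √N ≤ 2 (√N - 1)`
    have hlog : Real.log N ≤ 2 * √N - 2 := by
      have := Real.log_le_sub_one_of_pos (Real.sqrt_pos.2 (by linarith : 0 < N))
      rw [Real.log_sqrt (by linarith)] at this
      linarith
    have hceil : (⌈Real.log N / δ⌉₊ : ℝ) * δ < Real.log N + δ := by
      have := Nat.ceil_lt_add_one (div_nonneg (Real.log_nonneg hN) hδ0.le)
      calc (⌈Real.log N / δ⌉₊ : ℝ) * δ < (Real.log N / δ + 1) * δ :=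
            mul_lt_mul_of_pos_right this hδ0
        _ = Real.log N + δ := by field_simp
    linarith

lemma escape_bound_of_mul_le_two_sqrt {n m δ A : ℝ} (hn : 0 < n) (hm : 0 < m) (hδ : 0 < δ) (hA0 : 0 ≤ A)
    (hA : A * δ ≤ 2 * √n) :
    (2 * A) ^ 2 * (1 / n) + 1 / δ ^ 2 + 4 / n * (1 / (δ * m / n) ^ 2 + 2 * A / (δ * m / n))
      ≤ 25 / δ ^ 2 * (1 + n / m ^ 2) := by
  have hsq : √n ^ 2 = n := Real.sq_sqrt hn.le
  have hAδ2 : (A * δ) ^ 2 ≤ 4 * n := by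
    nlinarith [mul_nonneg hA0 hδ.le]
  have hamgm : 2 * √n * m ≤ n + m ^ 2 := by nlinarith [sq_nonneg (√n - m)]
  have hexpand : (2 * A) ^ 2 * (1 / n) + 1 / δ ^ 2
      + 4 / n * (1 / (δ * m / n) ^ 2 + 2 * A / (δ * m / n))
      = (4 * (A * δ) ^ 2 / n + 1 + 4 * n / m ^ 2 + 4 * (A * δ) * (2 * m) / m ^ 2) / δ ^ 2 := by
    field_simp
    ring
  rw [hexpand, div_mul_eq_mul_div, div_le_div_iff_of_pos_right (by positivity)]
  have h1 : 4 * (A * δ) ^ 2 / n ≤ 16 := by rw [div_le_iff₀ hn]; linarith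
  have h2 : 4 * (A * δ) * (2 * m) / m ^ 2 ≤ 8 * (n + m ^ 2) / m ^ 2 := by
    refine div_le_div_of_nonneg_right ?_ (by positivity)
    nlinarith
  have h3 : 8 * (n + m ^ 2) / m ^ 2 = 8 + 8 * (n / m ^ 2) := by field_simp; ring
  have h4 : 4 * n / m ^ 2 = 4 * (n / m ^ 2) := by ring
  have h5 : 0 ≤ n / m ^ 2 := by positivity
  linarith

/-- Escape-time bound on expanders, in matrix form: there is a universal constant
`C > 0` such that for any nonnegative `Q` with `‖Q‖ ≤ 1 − δm/n` and
`(Qᵗ)_{s,x} ≤ 1/n + (1−δ)ᵗ`, one has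
`Σ_{t≥0} (t+1)(Qᵗ)_{s,s} ≤ (C/δ²)(1 + n/m²)`. -/
theorem stmt19 :
    ∃ C : ℝ, 0 < C ∧
      ∀ (n : ℕ), 2 ≤ n →
      ∀ Q : Matrix (Fin n) (Fin n) ℝ,
        (∀ i j, 0 ≤ Q i j) →
        ∀ δ m : ℝ, 0 < δ → δ ≤ 1 → 0 < m → m ≤ n →
        (∀ x : Fin n → ℝ,
          Real.sqrt (∑ i, (Q.mulVec x) i ^ 2) ≤
            (1 - δ * m / n) * Real.sqrt (∑ i, x i ^ 2)) →
        (∀ (t : ℕ) (s x : Fin n), (Q ^ t) s x ≤ 1 / n + (1 - δ) ^ t) →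
        ∀ s : Fin n,
          ∑' t : ℕ, ((t : ℝ) + 1) * (Q ^ t) s s ≤ C / δ ^ 2 * (1 + n / m ^ 2) := by
  refine ⟨25, by norm_num, fun n hn Q hQ δ m hδ0 hδ1 hm0 hmn hnorm hent s => ?_⟩
  have hn0 : (0 : ℝ) < n := by positivity
  have hδmn : 0 < δ * m / n := by positivity
  have hδmn1 : δ * m / n ≤ 1 := by rw [div_le_one hn0]; nlinarith
  obtain ⟨A, hθA, hA⟩ := exists_one_sub_pow_le_inv_and_mul_le_two_sqrt hδ0 hδ1
    (by exact_mod_cast (by omega : 1 ≤ n) : (1 : ℝ) ≤ n)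
  have hQA : ∀ i j, (Q ^ A) i j ≤ 2 / n := fun i j =>
    calc (Q ^ A) i j ≤ 1 / n + (1 - δ) ^ A := hent A i j
      _ ≤ 1 / n + 1 / n := by gcongr
      _ = 2 / n := by ring
  have hdecay := Matrix.pow_add_two_mul_apply_self_le hQ (by linarith) hnorm hQA
  calc ∑' t : ℕ, ((t : ℝ) + 1) * (Q ^ t) s s
      ≤ ((2 * A : ℕ) : ℝ) ^ 2 * (1 / n) + 1 / (1 - (1 - δ)) ^ 2
        + 4 / n * (1 / (1 - (1 - δ * m / n)) ^ 2 + (2 * A : ℕ) / (1 - (1 - δ * m / n))) := by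
        refine tsum_le_of_head_tail (fun t => mul_nonneg (by positivity)
          (pow_apply_nonneg hQ t s s)) (by positivity) (by linarith) (by linarith)
          (by linarith) (by linarith) (fun t _ => by gcongr; exact hent t s s) (fun u => ?_)
        push_cast
        refine mul_le_mul_of_nonneg_left ((hdecay u s).trans_eq ?_) (by positivity)
        simp only [Fintype.card_fin]; field_simp; ring
    _ ≤ 25 / δ ^ 2 * (1 + n / m ^ 2) := by
        simp only [sub_sub_cancel, Nat.cast_mul, Nat.cast_ofNat]
        exact escape_bound_of_mul_le_two_sqrt hn0 hm0 hδ0 (Nat.cast_nonneg A) hA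
end
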